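/- arXiv:1409.6455 — 4 statements merged into one kernel-verified Lean document; each statement's English description precedes it below -/
import Mathlib

section
/- Let x be a real number with x ≠ 0, let n ≥ 1 be a natural number, and suppose that u_m(x) ≠ 0 for all 1 ≤ m ≤ n. Then the n-th ⊙-power of 1/x satisfies (1/x)^{⊙n} = v_n(x)/u_n(x). -/
open Real

/-- The tangent-addition operation `x ⊙ y = (x + y)/(1 - x*y)`. -/
noncomputable def odot (x y : ℝ) : ℝ := (x + y) / (1 - x * y)

/-- The `n`-th ⊙-power of `t`, for `n ≥ 1`: `t^{⊙1} = t`, `t^{⊙n} = t ⊙ t^{⊙(n-1)}`. -/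
noncomputable def opow (t : ℝ) : ℕ → ℝ
  | 0 => 0
  | 1 => t
  | (n + 2) => odot t (opow t (n + 1))

/-- The sequence `u_n(x)`: `u_0 = 1`, `u_1 = x`, `u_n = 2x·u_{n-1} - (1+x²)·u_{n-2}`. -/
noncomputable def u (x : ℝ) : ℕ → ℝ
  | 0 => 1
  | 1 => x
  | (n + 2) => 2 * x * u x (n + 1) - (1 + x ^ 2) * u x n

/-- The sequence `v_n(x)`: `v_0 = 0`, `v_1 = 1`, `v_n = 2x·v_{n-1} - (1+x²)·v_{n-2}`. -/
noncomputable def v (x : ℝ) : ℕ → ℝ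
  | 0 => 0
  | 1 => 1
  | (n + 2) => 2 * x * v x (n + 1) - (1 + x ^ 2) * v x n

theorem opow_inv_eq_v_div_u (x : ℝ) (hx : x ≠ 0) (n : ℕ) (hn : 1 ≤ n)
    (hu : ∀ m, 1 ≤ m → m ≤ n → u x m ≠ 0) :
    opow (1 / x) n = v x n / u x n := by
  have key : ∀ k, u x (k + 1) = x * u x k - v x k ∧ v x (k + 1) = u x k + x * v x k := by
    intro k
    induction k with
    | zero => simp [u, v]
    | succ m ih =>
      obtain ⟨h1, h2⟩ := ih
      constructor
      · show 2 * x * u x (m + 1) - (1 + x ^ 2) * u x m = x * u x (m + 1) - v x (m + 1)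
        rw [h1, h2]; ring
      · show 2 * x * v x (m + 1) - (1 + x ^ 2) * v x m = u x (m + 1) + x * v x (m + 1)
        rw [h1, h2]; ring
  induction n with
  | zero => omega
  | succ m ih =>
    rcases Nat.eq_or_lt_of_le hn with h | h
    · have : m = 0 := by omega
      subst this
      simp [opow, u, v]
    · have hm : 1 ≤ m := by omega
      have ih' := ih hm (fun k hk1 hk2 => hu k hk1 (by omega))
      have hum : u x m ≠ 0 := hu m hm (by omega)
      have hum1 : u x (m + 1) ≠ 0 := hu (m + 1) (by omega) le_rfl
      obtain ⟨h1, h2⟩ := key m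
      obtain ⟨m, rfl⟩ : ∃ k, m = k + 1 := ⟨m - 1, by omega⟩
      show odot (1 / x) (opow (1 / x) (m + 1)) = _
      rw [ih', odot, h1, h2]
      have hd : 1 - 1 / x * (v x (m + 1) / u x (m + 1)) =
          (x * u x (m + 1) - v x (m + 1)) / (x * u x (m + 1)) := by
        field_simp
      rw [hd]
      have hden : x * u x (m + 1) - v x (m + 1) ≠ 0 := h1 ▸ hum1
      field_simp
end

section
/- Let x be a real number with x ≠ 1 and x ≠ −1, let n ≥ 1 be a natural number, and suppose that v_m(x) ≠ 0 for all odd m with 1 ≤ m ≤ n and u_m(x) ≠ 0 for all even m with 2 ≤ m ≤ n. Then the n-th ⊙-power of x satisfies: x^{⊙n} = u_n(x)/v_n(x) if n is odd, and x^{⊙n} = −v_n(x)/u_n(x) if n is even. -/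
/-!
The recurrences say that `u_n + i v_n = (x + i)^n`, so `u_{n+1} = x u_n - v_n` and
`v_{n+1} = u_n + x v_n`. Consequently ⊙-adding `x` to `-v_n/u_n` gives `u_{n+1}/v_{n+1}`, and
⊙-adding `x` to `u_n/v_n` gives `-v_{n+1}/u_{n+1}`; induction on `n` alternates between the two.
-/

open Real

theorem u_add_two (x : ℝ) (n : ℕ) :
    u x (n + 2) = 2 * x * u x (n + 1) - (1 + x ^ 2) * u x n := rfl

theorem v_add_two (x : ℝ) (n : ℕ) :
    v x (n + 2) = 2 * x * v x (n + 1) - (1 + x ^ 2) * v x n := rfl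

theorem u_succ_and_v_succ (x : ℝ) (n : ℕ) :
    u x (n + 1) = x * u x n - v x n ∧ v x (n + 1) = u x n + x * v x n := by
  induction n using Nat.twoStepInduction with
  | zero => simp [u, v]
  | one => constructor <;> simp only [u, v] <;> ring
  | more n _ ih =>
    change u x (n + 2) = _ ∧ v x (n + 2) = _ at ih
    rw [u_add_two x (n + 1), v_add_two x (n + 1)]
    constructor
    · linear_combination x * ih.1 + ih.2
    · linear_combination x * ih.2 - ih.1

theorem u_succ (x : ℝ) (n : ℕ) : u x (n + 1) = x * u x n - v x n :=
  (u_succ_and_v_succ x n).1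

theorem v_succ (x : ℝ) (n : ℕ) : v x (n + 1) = u x n + x * v x n :=
  (u_succ_and_v_succ x n).2

theorem opow_succ (t : ℝ) (n : ℕ) : opow t (n + 1) = odot t (opow t n) := by
  cases n <;> simp [opow, odot]

-- When `b = x * a` both sides are `0`, by the convention `_ / 0 = 0`.
theorem odot_div (x a b : ℝ) (hb : b ≠ 0) : odot x (a / b) = (a + x * b) / (b - x * a) := by
  have hnum : x + a / b = (a + x * b) / b := by field_simp; ring
  have hden : 1 - x * (a / b) = (b - x * a) / b := by field_simp
  rw [odot, hnum, hden, div_div_div_cancel_right₀ hb]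

theorem odot_neg_v_div_u (x : ℝ) (n : ℕ) (hu : u x n ≠ 0) :
    odot x (-(v x n / u x n)) = u x (n + 1) / v x (n + 1) := by
  rw [← neg_div, odot_div x _ _ hu, u_succ, v_succ]
  ring

theorem odot_u_div_v (x : ℝ) (n : ℕ) (hv : v x n ≠ 0) :
    odot x (u x n / v x n) = -(v x (n + 1) / u x (n + 1)) := by
  rw [odot_div x _ _ hv, u_succ, v_succ, ← div_neg]
  ring

theorem opow_eq_general (x : ℝ) (n : ℕ)
    (hv : ∀ m, 1 ≤ m → m ≤ n → Odd m → v x m ≠ 0)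
    (hu : ∀ m, 2 ≤ m → m ≤ n → Even m → u x m ≠ 0) :
    (Odd n → opow x n = u x n / v x n) ∧
    (Even n → opow x n = -(v x n / u x n)) := by
  induction n with
  | zero => simp [opow, u, v]
  | succ n ih =>
    obtain ⟨ih_odd, ih_even⟩ := ih (fun m h1 h2 => hv m h1 (by omega))
      (fun m h1 h2 => hu m h1 (by omega))
    rcases Nat.even_or_odd n with hn | hn
    · have hun : u x n ≠ 0 := by
        rcases Nat.eq_zero_or_pos n with rfl | hpos
        · simp [u]
        · exact hu n (by obtain ⟨r, rfl⟩ := hn; omega) (by omega) hn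
      refine ⟨fun _ => ?_, fun h => absurd h (Nat.not_even_iff_odd.2 hn.add_one)⟩
      rw [opow_succ, ih_even hn, odot_neg_v_div_u x n hun]
    · have hvn : v x n ≠ 0 := hv n hn.pos (by omega) hn
      refine ⟨fun h => absurd h (Nat.not_odd_iff_even.2 hn.add_one), fun _ => ?_⟩
      rw [opow_succ, ih_odd hn, odot_u_div_v x n hvn]

theorem opow_eq (x : ℝ) (hx1 : x ≠ 1) (hx2 : x ≠ -1) (n : ℕ) (hn : 1 ≤ n)
    (hv : ∀ m, 1 ≤ m → m ≤ n → Odd m → v x m ≠ 0)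
    (hu : ∀ m, 2 ≤ m → m ≤ n → Even m → u x m ≠ 0) :
    (Odd n → opow x n = u x n / v x n) ∧
    (Even n → opow x n = -(v x n / u x n)) :=
  opow_eq_general x n hv hu
end

section
/- For every odd natural number k ≥ 1, π/4 = 2·arctan(1/√(2^k)) + arctan((2^k − 1 − 2^{(k/2)+1})/(2^k − 1 + 2^{(k/2)+1})), where 2^{(k/2)+1} denotes the real power 2·(2^k)^{1/2}. -/
open Real

theorem pi_four_eq_arctan_sqrt_two_pow (k : ℕ) (hk : 1 ≤ k) (hodd : Odd k) :
    π / 4 = 2 * arctan (1 / Real.sqrt (2 ^ k)) +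
      arctan ((2 ^ k - 1 - 2 * Real.sqrt (2 ^ k)) /
        (2 ^ k - 1 + 2 * Real.sqrt (2 ^ k))) := by
  set s := Real.sqrt (2 ^ k) with hs
  have h2k : (2:ℝ) ≤ 2 ^ k := by
    calc (2:ℝ) = 2 ^ 1 := (pow_one 2).symm
    _ ≤ 2 ^ k := pow_le_pow_right₀ one_le_two hk
  have hs1 : 1 < s := by
    rw [hs, show (1:ℝ) = Real.sqrt 1 from Real.sqrt_one.symm]
    exact Real.sqrt_lt_sqrt zero_le_one (by linarith)
  have hs0 : 0 < s := by linarith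
  have hsq : s ^ 2 = 2 ^ k := Real.sq_sqrt (by positivity)
  have hd : 0 < s ^ 2 - 1 := by nlinarith
  have he : 0 < s ^ 2 - 1 + 2 * s := by nlinarith
  rw [← hsq]
  have h1 : (1/s) * (1/s) < 1 := by
    rw [div_mul_div_comm, one_mul, div_lt_one (by positivity)]; nlinarith
  have e1 : 2 * arctan (1/s) = arctan ((1/s + 1/s) / (1 - (1/s) * (1/s))) := by
    rw [two_mul]; exact arctan_add h1
  have e2 : (1/s + 1/s) / (1 - (1/s) * (1/s)) = 2 * s / (s ^ 2 - 1) := by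
    rw [div_eq_div_iff (by nlinarith) (by nlinarith)]
    field_simp
    ring
  have hAB : (2 * s / (s ^ 2 - 1)) * ((s ^ 2 - 1 - 2 * s) / (s ^ 2 - 1 + 2 * s)) < 1 := by
    rw [div_mul_div_comm, div_lt_one (by positivity)]
    nlinarith [sq_nonneg (s ^ 2 - 1), sq_nonneg s]
  have e3 : arctan (2 * s / (s ^ 2 - 1)) + arctan ((s ^ 2 - 1 - 2 * s) / (s ^ 2 - 1 + 2 * s))
      = π / 4 := by
    rw [arctan_add hAB]
    have harg : (2 * s / (s ^ 2 - 1) + (s ^ 2 - 1 - 2 * s) / (s ^ 2 - 1 + 2 * s)) /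
        (1 - (2 * s / (s ^ 2 - 1)) * ((s ^ 2 - 1 - 2 * s) / (s ^ 2 - 1 + 2 * s))) = 1 := by
      rw [div_eq_one_iff_eq]
      · field_simp; ring
      · intro h
        rw [div_mul_div_comm, sub_eq_zero, eq_comm, div_eq_one_iff_eq (by positivity)] at h
        nlinarith [sq_nonneg (s ^ 2 - 1), sq_nonneg s]
    rw [harg, arctan_one]
  rw [e1, e2, ← e3]
end

section
/- π/4 = 2·arctan(8/(5 + √29)³) + arctan(69/71). -/
open Real

theorem pi_four_eq_arctan_sqrt29 :
    π / 4 = 2 * arctan (8 / (5 + Real.sqrt 29) ^ 3) + arctan (69 / 71) := by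
  have hs : Real.sqrt 29 ^ 2 = 29 := Real.sq_sqrt (by norm_num)
  have hs5 : (5:ℝ) < Real.sqrt 29 := by
    nlinarith [Real.sqrt_nonneg 29, hs]
  have hs6 : Real.sqrt 29 < 6 := by
    nlinarith [Real.sqrt_nonneg 29, hs]
  set s := Real.sqrt 29 with hsdef
  have hx : 8 / (5 + s) ^ 3 = 13 * s - 70 := by
    rw [div_eq_iff (by positivity)]
    ring_nf
    nlinarith [hs]
  set x : ℝ := 13 * s - 70 with hxdef
  have hx0 : 0 < x := by nlinarith
  have hx1 : x < 1/10 := by nlinarith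
  have hmul : x * x < 1 := by nlinarith
  have h2 : arctan x + arctan x = arctan (1/70) := by
    rw [arctan_add hmul]
    congr 1
    rw [div_eq_div_iff (by nlinarith) (by norm_num)]
    nlinarith [hs]
  have h3 : arctan (1/70) + arctan (69/71) = π / 4 := by
    rw [arctan_add (by norm_num)]
    norm_num [Real.arctan_one]
  rw [hx, two_mul, add_assoc]
  rw [show arctan x + (arctan x + arctan (69/71)) = (arctan x + arctan x) + arctan (69/71) by ring,
    h2, h3]
end
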